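/- For the cycle-with-hub network J of the previous statement, every coefficient of the influence vector lies in the interval [α/n, 1/(αn)]. -/

import Mathlib

open Matrix BigOperators

/-- The influence vector of an input-output matrix `W` with labor share `α`. -/
noncomputable def influence {n : ℕ} (α : ℝ) (W : Matrix (Fin n) (Fin n) ℝ) : Fin n → ℝ :=
  (α / (n : ℝ)) • ((1 - (1 - α) • Wᵀ)⁻¹ *ᵥ fun _ => 1)

/-!
Write `b = 1 - α` and extend the influence vector `p` by zero beyond the last node. Along the
chain the steady-state equations read `p k = r + b p (k+1)`, where `r = α/n + b p₀/(n-1)` is the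
inflow from the hub, so `p k = r (1 + b + ⋯ + b^(n-1-k))` decreases from `p 1 = r G`, where
`G = 1 + b + ⋯ + b^(n-2)`. The hub equation `p₀ = α/n + b p 1` then pins down `r` through
`r (n - 1 - b² G) = (α/n)(n - 1 + b)`, and both bounds reduce to the elementary estimates
`G ≤ n - 1` and `α G ≤ 1`.
-/

open Finset

theorem det_one_sub_smul_transpose_ne_zero {ι : Type*} [Fintype ι] [DecidableEq ι]
    {α : ℝ} {X : Matrix ι ι ℝ} (hα0 : 0 < α) (hα1 : α ≤ 1) (hX0 : ∀ i j, 0 ≤ X i j)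
    (hX1 : ∀ i, ∑ j, X i j = 1) : (1 - (1 - α) • Xᵀ).det ≠ 0 := by
  refine det_ne_zero_of_sum_col_lt_diag fun k => ?_
  have hkk : X k k ≤ 1 := hX1 k ▸ single_le_sum (fun j _ => hX0 k j) (mem_univ k)
  have hoff : ∀ i ∈ univ.erase k, ‖(1 - (1 - α) • Xᵀ) i k‖ = (1 - α) * X k i := fun i hi => by
    rw [Matrix.sub_apply, one_apply_ne (ne_of_mem_erase hi), Matrix.smul_apply, transpose_apply,
      smul_eq_mul, zero_sub, norm_neg, Real.norm_of_nonneg (mul_nonneg (by linarith) (hX0 k i))]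
  have hdiag : ‖(1 - (1 - α) • Xᵀ) k k‖ = 1 - (1 - α) * X k k := by
    rw [Matrix.sub_apply, one_apply_eq, Matrix.smul_apply, transpose_apply, smul_eq_mul,
      Real.norm_of_nonneg (by nlinarith [hX0 k k])]
  rw [sum_congr rfl hoff, ← mul_sum, sum_erase_eq_sub (mem_univ k), hX1 k, hdiag]
  nlinarith

theorem influence_eq_add_mulVec {n : ℕ} {α : ℝ} {X : Matrix (Fin n) (Fin n) ℝ}
    (hdet : (1 - (1 - α) • Xᵀ).det ≠ 0) (i : Fin n) :
    influence α X i = α / n + (1 - α) * (Xᵀ *ᵥ influence α X) i := by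
  have hinv : (1 - (1 - α) • Xᵀ) *ᵥ ((1 - (1 - α) • Xᵀ)⁻¹ *ᵥ fun _ => 1) = fun _ => 1 := by
    rw [mulVec_mulVec, mul_nonsing_inv _ (isUnit_iff_ne_zero.mpr hdet), one_mulVec]
  have := congrFun hinv i
  rw [sub_mulVec, one_mulVec, smul_mulVec] at this
  simp only [influence, mulVec_smul, Pi.smul_apply, smul_eq_mul, Pi.sub_apply] at this ⊢
  linear_combination (α / n) * this

noncomputable def chainHub (n : ℕ) : Matrix (Fin n) (Fin n) ℝ :=
  of fun i j => if i.val = 0 then (if j.val = 0 then 0 else 1 / ((n : ℝ) - 1))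
    else if j.val + 1 = i.val then 1 else 0

theorem chainHub_nonneg {n : ℕ} (i j : Fin n) : 0 ≤ chainHub n i j := by
  have : (1 : ℝ) ≤ n := by exact_mod_cast i.pos
  simp only [chainHub, of_apply]
  split_ifs <;> first | rfl | positivity

theorem chainHub_sum_row {n : ℕ} (hn : 2 ≤ n) (i : Fin n) : ∑ j, chainHub n i j = 1 := by
  simp only [chainHub, of_apply]
  rw [Fin.sum_univ_eq_sum_range (fun k => if i.val = 0 then
    (if k = 0 then 0 else 1 / ((n : ℝ) - 1)) else if k + 1 = i.val then 1 else 0)]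
  split_ifs with hi
  · obtain ⟨m, rfl⟩ : ∃ m, n = m + 1 := ⟨n - 1, by omega⟩
    have : (1 : ℝ) ≤ m := by exact_mod_cast (by omega : 1 ≤ m)
    simp only [sum_range_succ', Nat.add_one_ne_zero, if_false, if_true, sum_const, card_range,
      nsmul_eq_mul, Nat.cast_add_one, add_sub_cancel_right, add_zero]
    field_simp
  · rw [sum_eq_single_of_mem (i.val - 1) (mem_range.mpr (by omega))
      (fun k _ hk => if_neg (by omega)), if_pos (by omega)]

theorem chainHub_transpose_mulVec {n : ℕ} {P : ℕ → ℝ} (hout : ∀ k, n ≤ k → P k = 0)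
    (i : Fin n) : ((chainHub n)ᵀ *ᵥ fun j => P j) i =
      (if i.val = 0 then 0 else P 0 / ((n : ℝ) - 1)) + P (i.val + 1) := by
  simp only [mulVec, dotProduct, transpose_apply, chainHub, of_apply]
  rw [Fin.sum_univ_eq_sum_range (fun k => (if k = 0 then
    (if i.val = 0 then 0 else 1 / ((n : ℝ) - 1)) else if i.val + 1 = k then 1 else 0) * P k)]
  have hsplit : ∀ k, (if k = 0 then (if i.val = 0 then 0 else 1 / ((n : ℝ) - 1))
      else if i.val + 1 = k then 1 else 0) * P k =
      (if k = 0 then (if i.val = 0 then 0 else P 0 / ((n : ℝ) - 1)) else 0) +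
      (if k = i.val + 1 then P k else 0) := fun k => by
    split_ifs <;> first | omega | (subst_vars; ring)
  rw [sum_congr rfl fun k _ => hsplit k, sum_add_distrib, sum_ite_eq', sum_ite_eq',
    if_pos (mem_range.mpr i.pos),
    ite_eq_left_iff.mpr fun h => (hout _ (by simpa using h)).symm]

theorem eq_mul_geom_sum_of_eq_add_mul {P : ℕ → ℝ} {r b : ℝ} {m N : ℕ}
    (hrec : ∀ k, m ≤ k → k < N → P k = r + b * P (k + 1)) (hN : P N = 0) {k : ℕ}
    (hmk : m ≤ k) (hkN : k ≤ N) : P k = r * ∑ j ∈ range (N - k), b ^ j := by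
  induction hd : N - k generalizing k with
  | zero => rw [show k = N by omega, hN, sum_range_zero, mul_zero]
  | succ d ih =>
    rw [hrec k hmk (by omega), ih (by omega) (by omega) (by omega), geom_sum_succ]
    ring

theorem chainHub_steady_state_eq {n : ℕ} {a b : ℝ} {P : ℕ → ℝ} (hn : 2 ≤ n)
    (hout : ∀ k, n ≤ k → P k = 0)
    (hfix : ∀ i : Fin n, P i = a + b * ((chainHub n)ᵀ *ᵥ fun j => P j) i) :
    P 0 = a + b * ((a + b * (P 0 / ((n : ℝ) - 1))) * ∑ j ∈ range (n - 1), b ^ j) ∧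
      ∀ k, 1 ≤ k → k ≤ n → P k = (a + b * (P 0 / ((n : ℝ) - 1))) * ∑ j ∈ range (n - k), b ^ j := by
  have hchain : ∀ k, 1 ≤ k → k ≤ n →
      P k = (a + b * (P 0 / ((n : ℝ) - 1))) * ∑ j ∈ range (n - k), b ^ j :=
    fun k => eq_mul_geom_sum_of_eq_add_mul (fun k hk hkn => by
      rw [hfix ⟨k, hkn⟩, chainHub_transpose_mulVec hout, if_neg (by simp only; omega)]
      ring) (hout n le_rfl)
  refine ⟨?_, hchain⟩
  have h0 := hfix ⟨0, by omega⟩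
  rw [chainHub_transpose_mulVec hout] at h0
  simp only [if_true, zero_add] at h0
  rwa [hchain 1 le_rfl (by omega)] at h0

theorem geom_sum_le_geom_sum {x : ℝ} (hx : 0 ≤ x) {k l : ℕ} (hkl : k ≤ l) :
    ∑ j ∈ range k, x ^ j ≤ ∑ j ∈ range l, x ^ j :=
  sum_le_sum_of_subset_of_nonneg (range_mono hkl) fun j _ _ => pow_nonneg hx j

theorem geom_sum_le_of_le_one {x : ℝ} (hx0 : 0 ≤ x) (hx1 : x ≤ 1) (m : ℕ) :
    ∑ j ∈ range m, x ^ j ≤ m := by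
  calc ∑ j ∈ range m, x ^ j ≤ ∑ j ∈ range m, (1 : ℝ) := sum_le_sum fun j _ => pow_le_one₀ hx0 hx1
    _ = m := by rw [sum_const, card_range, nsmul_one]

theorem mul_geom_sum_one_sub_le_one {α : ℝ} (hα : α ≤ 1) (m : ℕ) :
    α * ∑ j ∈ range m, (1 - α) ^ j ≤ 1 := by
  have := mul_neg_geom_sum (1 - α) m
  rw [sub_sub_cancel] at this
  linarith [pow_nonneg (sub_nonneg.mpr hα) m]

theorem hub_balance_bounds {α a N G h r : ℝ} (hα0 : 0 < α) (hα1 : α < 1) (ha : 0 < a)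
    (hN : 0 < N) (hG0 : 0 ≤ G) (hGN : G ≤ N) (hαG : α * G ≤ 1)
    (hh : h = a + (1 - α) * (r * G)) (hr : r = a + (1 - α) * (h / N)) :
    a ≤ r ∧ r * G ≤ a / α ^ 2 ∧ a ≤ h ∧ h ≤ a / α ^ 2 := by
  have hb0 : 0 < 1 - α := by linarith
  have hrN : r * N = a * N + (1 - α) * h := by rw [hr]; field_simp
  have hbal : r * (N - (1 - α) ^ 2 * G) = a * (N + (1 - α)) := by
    linear_combination hrN + (1 - α) * hh
  have hD : 0 < N - (1 - α) ^ 2 * G := by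
    have hb2 : (1 - α) ^ 2 < 1 := by nlinarith
    nlinarith [mul_le_mul_of_nonneg_left hGN (sq_nonneg (1 - α)), mul_pos (sub_pos.mpr hb2) hN]
  have hr0 : 0 ≤ r := by
    by_contra! hneg
    nlinarith [mul_neg_of_neg_of_pos hneg hD]
  -- use `α G ≤ 1` when `α N ≥ 1` and `G ≤ N` otherwise
  have hcore : G * (α ^ 2 * (N + (1 - α)) + (1 - α) ^ 2) ≤ N := by
    rcases le_or_gt 1 (α * N) with hαN | hαN
    · nlinarith [mul_le_mul_of_nonneg_left (show α ^ 2 + (1 - α) ≤ α * N by nlinarith)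
        (mul_nonneg hG0 hb0.le)]
    · nlinarith [mul_le_mul_of_nonneg_left hαN.le (mul_nonneg hG0 hα0.le),
        mul_nonneg (mul_nonneg hG0 hα0.le) (sq_nonneg (1 - α))]
  have hrG : r * G ≤ a / α ^ 2 := by
    rw [le_div_iff₀ (by positivity)]
    refine le_of_mul_le_mul_right ?_ hD
    nlinarith [mul_le_mul_of_nonneg_left hcore ha.le]
  have hrG0 : 0 ≤ r * G := mul_nonneg hr0 hG0
  have hh0 : a ≤ h := by nlinarith
  refine ⟨?_, hrG, hh0, ?_⟩
  · rw [hr]; have := div_nonneg (ha.le.trans hh0) hN.le; nlinarith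
  · have hαα : a ≤ a / α ^ 2 * (1 - (1 - α)) := by
      rw [sub_sub_cancel, div_mul_eq_mul_div, le_div_iff₀ (by positivity)]
      nlinarith [mul_pos ha hα0]
    nlinarith

theorem chainHub_steady_state_mem_Icc {n : ℕ} (hn : 2 ≤ n) {α : ℝ} (hα0 : 0 < α) (hα1 : α < 1)
    {P : ℕ → ℝ} (hout : ∀ k, n ≤ k → P k = 0)
    (hfix : ∀ i : Fin n, P i = α / n + (1 - α) * ((chainHub n)ᵀ *ᵥ fun j => P j) i)
    {k : ℕ} (hk : k < n) : P k ∈ Set.Icc (α / n) (α / n / α ^ 2) := by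
  obtain ⟨hhub, hchain⟩ := chainHub_steady_state_eq hn hout hfix
  have hb0 : 0 ≤ 1 - α := by linarith
  have hN : (0 : ℝ) < n - 1 := by
    have : (2 : ℝ) ≤ n := by exact_mod_cast hn
    linarith
  have hGN := geom_sum_le_of_le_one hb0 (by linarith) (n - 1)
  rw [Nat.cast_pred (by omega)] at hGN
  obtain ⟨hra, hrG, hP0a, hP0b⟩ := hub_balance_bounds hα0 hα1 (by positivity) hN
    (sum_nonneg fun j _ => pow_nonneg hb0 j) hGN (mul_geom_sum_one_sub_le_one hα1.le _) hhub rfl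
  rcases Nat.eq_zero_or_pos k with rfl | hk0
  · exact ⟨hP0a, hP0b⟩
  · have hr0 := (div_pos hα0 (by linarith : (0 : ℝ) < n)).le.trans hra
    have hGk1 := geom_sum_one (1 - α) ▸ geom_sum_le_geom_sum hb0 (show 1 ≤ n - k by omega)
    have hGkG := geom_sum_le_geom_sum hb0 (show n - k ≤ n - 1 by omega)
    rw [hchain k hk0 hk.le]
    exact ⟨by nlinarith [mul_le_mul_of_nonneg_left hGk1 hr0],
      by nlinarith [mul_le_mul_of_nonneg_left hGkG hr0]⟩

/-- For the chain-with-hub network `J`, every coefficient of the influence vector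
lies in the interval `[α/n, 1/(αn)]`. -/
theorem influence_chain_hub_bounds (n : ℕ) (hn : 3 < n) (α : ℝ) (hα0 : 0 < α) (hα1 : α < 1)
    (X : Matrix (Fin n) (Fin n) ℝ)
    (hX : ∀ i j : Fin n, X i j =
      if i.val = 0 then (if j.val = 0 then 0 else 1 / ((n : ℝ) - 1))
      else if j.val + 1 = i.val then 1 else 0) :
    ∀ i, influence α X i ∈ Set.Icc (α / (n : ℝ)) (1 / (α * (n : ℝ))) := by
  obtain rfl : X = chainHub n := Matrix.ext hX
  -- padding by zero makes the last chain equation an instance of the generic one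
  set P := Function.extend Fin.val (influence α (chainHub n)) 0
  have hpP : influence α (chainHub n) = fun j : Fin n => P j :=
    funext fun j => (Fin.val_injective.extend_apply _ 0 j).symm
  have hout : ∀ k, n ≤ k → P k = 0 := fun k hk =>
    Function.extend_apply' _ _ _ fun ⟨j, hj⟩ => by omega
  have hdet := det_one_sub_smul_transpose_ne_zero hα0 hα1.le chainHub_nonneg
    (chainHub_sum_row (n := n) (by omega))
  have hfix : ∀ i : Fin n, P i = α / n + (1 - α) * ((chainHub n)ᵀ *ᵥ fun j => P j) i := by
    simpa only [hpP] using influence_eq_add_mulVec hdet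
  intro i
  rw [hpP, show 1 / (α * (n : ℝ)) = α / n / α ^ 2 by field_simp]
  exact chainHub_steady_state_mem_Icc (by omega) hα0 hα1 hout hfix i.is_lt
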